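/- arXiv:2512.18884 — 2 statements merged into one kernel-verified Lean document; each statement's English description precedes it below -/
import Mathlib

section
/- For ν > 0 and α > 0, the Matérn correlation function M(x) = (2^(1-ν)/Γ(ν)) (x/α)^ν K_ν(x/α) admits the exact Gamma-mixture representation M(x) = ∫₀^∞ exp(-x²/(2λ)) p(λ) dλ for all x > 0, where p is the density of the Gamma(ν, 2α²) distribution, i.e. p(λ) = λ^(ν-1) exp(-λ/(2α²)) / (Γ(ν)(2α²)^ν). -/
/-!
Substituting `λ = (x²/2) / t` turns the Gamma mixture into `(x²/2)^ν / (Γ(ν) (2α²)^ν)` times the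
integral `∫₀^∞ exp(-t - (x/α)²/(4t)) t^(-ν-1) dt` defining `K_ν(x/α)`, since
`(x²/2)/(2α² t) = (x/α)²/(4t)`; the two prefactors then agree, both being `(x/(2α))^(2ν) / Γ(ν)`.
-/

open MeasureTheory Real Set
open scoped ENNReal

noncomputable def besselK (ν z : ℝ) : ℝ :=
  (1 / 2) * (z / 2) ^ ν *
    ∫ t in Set.Ioi (0 : ℝ), Real.exp (-t - z ^ 2 / (4 * t)) * t ^ (-ν - 1)

theorem integral_comp_div_Ioi {E : Type*} [NormedAddCommGroup E] [NormedSpace ℝ E]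
    (g : ℝ → E) {c : ℝ} (hc : 0 < c) :
    ∫ t in Ioi 0, (c / t ^ 2) • g (c / t) = ∫ y in Ioi 0, g y := by
  have himage : (c / ·) '' Ioi 0 = Ioi (0 : ℝ) := by
    ext y
    refine ⟨?_, fun hy ↦ ⟨c / y, div_pos hc hy, div_div_cancel₀ hc.ne'⟩⟩
    rintro ⟨t, ht, rfl⟩
    exact div_pos hc ht
  have hderiv (t : ℝ) (ht : t ∈ Ioi 0) :
      HasDerivWithinAt (c / ·) (-c / t ^ 2) (Ioi 0) t := by
    simpa [div_eq_mul_inv, neg_div] using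
      ((hasDerivAt_inv (ne_of_gt ht)).const_mul c).hasDerivWithinAt
  have hinj : InjOn (c / ·) (Ioi (0 : ℝ)) := fun a _ b _ hab ↦ by
    simpa only [div_div_cancel₀ hc.ne'] using congrArg (c / ·) hab
  conv_rhs =>
    rw [← himage, integral_image_eq_integral_abs_deriv_smul measurableSet_Ioi hderiv hinj]
  refine setIntegral_congr_fun measurableSet_Ioi fun t ht ↦ ?_
  rw [neg_div, abs_neg, abs_of_pos (div_pos hc (pow_pos ht 2))]

theorem gamma_mixture_integrand_comp_div {a s ν t : ℝ} (ha : 0 < a) (ht : 0 < t) :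
    a / t ^ 2 * (exp (-a / (a / t)) * ((a / t) ^ (ν - 1) * exp (-(a / t) / s))) =
      a ^ ν * (exp (-t - a / (s * t)) * t ^ (-ν - 1)) := by
  have hexp : exp (-a / (a / t)) * exp (-(a / t) / s) = exp (-t - a / (s * t)) := by
    rw [← exp_add]; congr 1; field_simp; ring
  have hrpow : a / t ^ 2 * (a / t) ^ (ν - 1) = a ^ ν * t ^ (-ν - 1) := by
    rw [div_rpow ha.le ht.le, rpow_sub_one ha.ne', rpow_sub_one ht.ne',
      show -ν - 1 = -(ν + 1) by ring, rpow_neg ht.le, rpow_add_one ht.ne']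
    field_simp
  linear_combination (exp (-a / (a / t)) * exp (-(a / t) / s)) * hrpow + a ^ ν * t ^ (-ν - 1) * hexp

theorem integral_gamma_mixture_integrand {a : ℝ} (ha : 0 < a) (s ν : ℝ) :
    ∫ l in Ioi 0, exp (-a / l) * (l ^ (ν - 1) * exp (-l / s)) =
      a ^ ν * ∫ t in Ioi 0, exp (-t - a / (s * t)) * t ^ (-ν - 1) := by
  rw [← integral_comp_div_Ioi _ ha, ← integral_const_mul]
  exact setIntegral_congr_fun measurableSet_Ioi fun t ht ↦ gamma_mixture_integrand_comp_div ha ht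

theorem matern_prefactor_mul_besselK_prefactor {z : ℝ} (hz : 0 ≤ z) (ν : ℝ) :
    2 ^ (1 - ν) * z ^ ν * (1 / 2 * (z / 2) ^ ν) = ((z / 2) ^ 2) ^ ν := by
  have hz2 : 0 ≤ z / 2 := by positivity
  rw [sq, mul_rpow hz2 hz2, show z = 2 * (z / 2) by ring, mul_rpow zero_le_two hz2,
    rpow_sub two_pos, rpow_one]
  field_simp

theorem matern_gamma_mixture_general (ν α : ℝ) (hα : 0 < α) (x : ℝ) (hx : 0 < x) :
    2 ^ (1 - ν) / Real.Gamma ν * (x / α) ^ ν * besselK ν (x / α) =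
      ∫ l in Set.Ioi (0 : ℝ),
        Real.exp (-x ^ 2 / (2 * l)) *
          (l ^ (ν - 1) * Real.exp (-l / (2 * α ^ 2)) /
            (Real.Gamma ν * (2 * α ^ 2) ^ ν)) := by
  have hmixture : ∫ l in Ioi 0, exp (-x ^ 2 / (2 * l)) * (l ^ (ν - 1) * exp (-l / (2 * α ^ 2))) =
      (x ^ 2 / 2) ^ ν * ∫ t in Ioi 0, exp (-t - (x / α) ^ 2 / (4 * t)) * t ^ (-ν - 1) := by
    convert integral_gamma_mixture_integrand (a := x ^ 2 / 2) (by positivity) (2 * α ^ 2) ν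
      using 5
    · ring
    · congr 1; ring
  have hconst : (x ^ 2 / 2) ^ ν / (2 * α ^ 2) ^ ν = ((x / α / 2) ^ 2) ^ ν := by
    rw [← div_rpow (by positivity) (by positivity)]
    congr 1; field_simp
  simp_rw [mul_div_assoc', integral_div, hmixture, besselK]
  set I := ∫ t in Ioi 0, exp (-t - (x / α) ^ 2 / (4 * t)) * t ^ (-ν - 1)
  calc _ = 2 ^ (1 - ν) * (x / α) ^ ν * (1 / 2 * (x / α / 2) ^ ν) / Gamma ν * I := by ring
    _ = _ := by
      rw [matern_prefactor_mul_besselK_prefactor (div_pos hx hα).le, ← hconst]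
      ring

/-- For `ν, α > 0`, the Matérn correlation
`M(x) = (2^(1-ν)/Γ(ν)) (x/α)^ν K_ν(x/α)` equals the Gamma mixture
`∫₀^∞ exp(-x²/(2λ)) p(λ) dλ`, where `p` is the Gamma(ν, 2α²) (shape-scale) density. -/
theorem matern_gamma_mixture (ν α : ℝ) (hν : 0 < ν) (hα : 0 < α) (x : ℝ) (hx : 0 < x) :
    2 ^ (1 - ν) / Real.Gamma ν * (x / α) ^ ν * besselK ν (x / α) =
      ∫ l in Set.Ioi (0 : ℝ),
        Real.exp (-x ^ 2 / (2 * l)) *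
          (l ^ (ν - 1) * Real.exp (-l / (2 * α ^ 2)) /
            (Real.Gamma ν * (2 * α ^ 2) ^ ν)) :=
  matern_gamma_mixture_general ν α hα x hx
end

section
/- For ν > 0 and μ > 0, the Kummer–Tricomi correlation function K(x) = [Γ(ν+μ)/Γ(ν)] U(μ, 1-ν, x²/(2β²)) equals the mixture E_Φ[M_ν,Φ(x)], where Φ² follows an inverse-Gamma distribution with shape μ and scale β²/2, and M_ν,φ(x) = (2^(1-ν)/Γ(ν))(x/φ)^ν K_ν(x/φ) is the Matérn correlation with smoothness ν and scale φ. -/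
open MeasureTheory Real Set
open scoped ENNReal

/-- Tricomi's confluent hypergeometric function `U(a,b,z)` via its integral representation. -/
noncomputable def tricomiU (a b z : ℝ) : ℝ :=
  (1 / Real.Gamma a) *
    ∫ t in Set.Ioi (0 : ℝ), Real.exp (-z * t) * t ^ (a - 1) * (1 + t) ^ (b - a - 1)

/-- The Matérn correlation with smoothness `ν` and scale `φ`. -/
noncomputable def maternCorr (ν φ x : ℝ) : ℝ :=
  2 ^ (1 - ν) / Real.Gamma ν * (x / φ) ^ ν * besselK ν (x / φ)

/-! ### Auxiliary lemmas -/

lemma intOn_exp_rpow {a r : ℝ} (ha : 0 < a) (hr : 0 < r) :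
    IntegrableOn (fun t : ℝ => Real.exp (-(a * t)) * t ^ (r - 1)) (Ioi 0) := by
  have h0 : IntegrableOn (fun x : ℝ => Real.exp (-x) * x ^ (r - 1)) (Ioi 0) :=
    Real.GammaIntegral_convergent hr
  have h : IntegrableOn (fun t : ℝ => Real.exp (-(a * t)) * (a * t) ^ (r - 1)) (Ioi 0) := by
    have := (integrableOn_Ioi_comp_mul_left_iff
      (fun x : ℝ => Real.exp (-x) * x ^ (r - 1)) 0 ha).2 (by simpa using h0)
    simpa using this
  have h2 : IntegrableOn
      (fun t : ℝ => a ^ ((1 : ℝ) - r) * (Real.exp (-(a * t)) * (a * t) ^ (r - 1))) (Ioi 0) :=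
    h.const_mul (a ^ ((1 : ℝ) - r))
  refine IntegrableOn.congr_fun h2 (fun t ht => ?_) measurableSet_Ioi
  have ht' : (0:ℝ) < t := ht
  rw [Real.mul_rpow ha.le ht'.le]
  rw [show a ^ ((1:ℝ) - r) * (Real.exp (-(a * t)) * (a ^ (r - 1) * t ^ (r - 1)))
      = (a ^ ((1:ℝ) - r) * a ^ (r - 1)) * (Real.exp (-(a * t)) * t ^ (r - 1)) by ring,
    ← Real.rpow_add ha, show (1:ℝ) - r + (r - 1) = 0 by ring, Real.rpow_zero, one_mul]

lemma int_exp_rpow {a r : ℝ} (ha : 0 < a) (hr : 0 < r) :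
    ∫ t in Ioi (0:ℝ), Real.exp (-(a * t)) * t ^ (r - 1) = Real.Gamma r / a ^ r := by
  have := Real.integral_rpow_mul_exp_neg_mul_Ioi hr ha
  rw [show ∫ t in Ioi (0:ℝ), Real.exp (-(a * t)) * t ^ (r - 1)
      = ∫ t in Ioi (0:ℝ), t ^ (r - 1) * Real.exp (-(a * t)) from
        setIntegral_congr_fun measurableSet_Ioi fun t _ => mul_comm _ _, this,
    one_div, Real.inv_rpow ha.le, inv_mul_eq_div]

/-- key pointwise computation for the `y = 1/x` substitution. -/
lemma inv_subst_ptwise {c r : ℝ} {x : ℝ} (hx : x ∈ Ioi (0:ℝ)) :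
    (|(-1:ℝ)| * x ^ ((-1:ℝ) - 1)) •
        ((fun y : ℝ => Real.exp (-(c / y)) * y ^ (-r - 1)) (x ^ (-1:ℝ)))
      = Real.exp (-(c * x)) * x ^ (r - 1) := by
  have hx' : (0:ℝ) < x := hx
  simp only [Real.rpow_neg_one, smul_eq_mul, abs_neg, abs_one, one_mul]
  rw [show c / x⁻¹ = c * x by field_simp, Real.inv_rpow hx'.le, ← Real.rpow_neg hx'.le,
    show -(-r - 1) = r + 1 by ring, show (-1:ℝ) - 1 = -2 by ring]
  rw [show x ^ (-2:ℝ) * (Real.exp (-(c * x)) * x ^ (r + 1))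
      = (x ^ (-2:ℝ) * x ^ (r + 1)) * Real.exp (-(c * x)) by ring,
    ← Real.rpow_add hx', show (-2:ℝ) + (r + 1) = r - 1 by ring]
  ring

lemma intOn_exp_inv {c r : ℝ} (hc : 0 < c) (hr : 0 < r) :
    IntegrableOn (fun y : ℝ => Real.exp (-(c / y)) * y ^ (-r - 1)) (Ioi 0) := by
  rw [← integrableOn_Ioi_comp_rpow_iff
    (fun y : ℝ => Real.exp (-(c / y)) * y ^ (-r - 1)) (p := -1) (by norm_num)]
  exact IntegrableOn.congr_fun (intOn_exp_rpow hc hr)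
    (fun x hx => (inv_subst_ptwise hx).symm) measurableSet_Ioi

lemma int_exp_inv {c r : ℝ} (hc : 0 < c) (hr : 0 < r) :
    ∫ y in Ioi (0:ℝ), Real.exp (-(c / y)) * y ^ (-r - 1) = Real.Gamma r / c ^ r := by
  rw [← integral_comp_rpow_Ioi
    (fun y : ℝ => Real.exp (-(c / y)) * y ^ (-r - 1)) (p := -1) (by norm_num),
    setIntegral_congr_fun measurableSet_Ioi (fun x hx => inv_subst_ptwise hx)]
  exact int_exp_rpow hc hr

lemma bessel_flip {c r : ℝ} (hc : 0 < c) :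
    ∫ t in Ioi (0:ℝ), Real.exp (-t - c / t) * t ^ (-r - 1)
      = c ^ (-r) * ∫ s in Ioi (0:ℝ), Real.exp (-s - c / s) * s ^ (r - 1) := by
  set g : ℝ → ℝ := fun t => Real.exp (-t - c / t) * t ^ (-r - 1) with hg
  have h1 : ∫ x in Ioi (0:ℝ), g (c * x) = c⁻¹ • ∫ t in Ioi (0:ℝ), g t := by
    simpa using integral_comp_mul_left_Ioi g 0 hc
  have h2 := integral_comp_rpow_Ioi (fun u : ℝ => g (c * u)) (p := -1) (by norm_num)
  have h3 : ∀ x ∈ Ioi (0:ℝ),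
      (|(-1:ℝ)| * x ^ ((-1:ℝ) - 1)) • ((fun u : ℝ => g (c * u)) (x ^ (-1:ℝ)))
        = c ^ (-(r + 1)) * (Real.exp (-x - c / x) * x ^ (r - 1)) := by
    intro x hx
    have hx' : (0:ℝ) < x := hx
    simp only [Real.rpow_neg_one, smul_eq_mul, abs_neg, abs_one, one_mul, hg]
    rw [show c * x⁻¹ = c / x from (div_eq_mul_inv c x).symm,
      show c / (c / x) = x by field_simp,
      Real.div_rpow hc.le hx'.le,
      show (-1:ℝ) - 1 = -2 by norm_num,
      show (-(c / x) - x) = (-x - c / x) by ring,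
      show (-r - 1 : ℝ) = -(r + 1) by ring,
      div_eq_mul_inv (c ^ (-(r + 1))), Real.rpow_neg hx'.le (r + 1), inv_inv]
    rw [show x ^ (-2:ℝ) * (Real.exp (-x - c / x) * (c ^ (-(r+1)) * x ^ (r + 1)))
        = c ^ (-(r+1)) * (Real.exp (-x - c / x) * (x ^ (-2:ℝ) * x ^ (r + 1))) by ring,
      ← Real.rpow_add hx', show (-2:ℝ) + (r + 1) = r - 1 by ring]
  rw [setIntegral_congr_fun measurableSet_Ioi h3, integral_const_mul, h1] at h2
  have h4 := congrArg (fun u : ℝ => c * u) h2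
  simp only [smul_eq_mul, ← mul_assoc] at h4
  rw [mul_inv_cancel₀ hc.ne', one_mul] at h4
  have hcoef : c * c ^ (-(r + 1)) = c ^ (-r) := by
    have h5 := Real.rpow_add hc 1 (-(r + 1))
    rw [Real.rpow_one] at h5
    rw [← h5, show (1:ℝ) + -(r + 1) = -r by ring]
  rw [← h4, hcoef]

lemma matern_eq {ν φ x : ℝ} (hφ : 0 < φ) (hx : 0 < x) :
    maternCorr ν φ x = (1 / Real.Gamma ν) *
      ∫ s in Ioi (0:ℝ), Real.exp (-s - x ^ 2 / (4 * φ ^ 2) / s) * s ^ (ν - 1) := by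
  have hw : 0 < x / φ := div_pos hx hφ
  have hc : 0 < (x / φ) ^ 2 / 4 := by positivity
  have hI : ∫ t in Ioi (0:ℝ), Real.exp (-t - (x / φ) ^ 2 / (4 * t)) * t ^ (-ν - 1)
      = ((x / φ) ^ 2 / 4) ^ (-ν) *
        ∫ s in Ioi (0:ℝ), Real.exp (-s - (x / φ) ^ 2 / 4 / s) * s ^ (ν - 1) := by
    simp_rw [show ∀ t : ℝ, (x / φ) ^ 2 / (4 * t) = (x / φ) ^ 2 / 4 / t from fun t => by ring]
    exact bessel_flip hc
  have hxf : x ^ 2 / (4 * φ ^ 2) = (x / φ) ^ 2 / 4 := by field_simp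
  rw [maternCorr, besselK, hI]
  simp_rw [hxf]
  set J := ∫ s in Ioi (0:ℝ), Real.exp (-s - (x / φ) ^ 2 / 4 / s) * s ^ (ν - 1) with hJ
  have hw2 : (0:ℝ) < x / φ / 2 := by positivity
  have e1 : (((x / φ) ^ 2 / 4 : ℝ)) ^ (-ν) = (x / φ / 2) ^ ((2:ℝ) * -ν) := by
    rw [show ((x / φ) ^ 2 / 4 : ℝ) = (x / φ / 2) ^ 2 by ring,
      ← Real.rpow_natCast (x / φ / 2) 2, ← Real.rpow_mul hw2.le]
    norm_num
  have e2 : (x / φ) ^ ν = 2 ^ ν * (x / φ / 2) ^ ν := by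
    rw [← Real.mul_rpow (by norm_num) hw2.le]
    congr 1
    ring
  have hcoef : 2 ^ ((1:ℝ) - ν) * (x / φ) ^ ν * (x / φ / 2) ^ ν * ((x / φ) ^ 2 / 4) ^ (-ν) / 2
      = 1 := by
    rw [e1, e2,
      show (2:ℝ) ^ ((1:ℝ) - ν) * (2 ^ ν * (x / φ / 2) ^ ν) * (x / φ / 2) ^ ν *
          (x / φ / 2) ^ ((2:ℝ) * -ν) / 2
        = 2 ^ ((1:ℝ) - ν) * 2 ^ ν / 2 * ((x / φ / 2) ^ ν * ((x / φ / 2) ^ ν *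
          (x / φ / 2) ^ ((2:ℝ) * -ν))) by ring,
      ← Real.rpow_add hw2, ← Real.rpow_add hw2, ← Real.rpow_add two_pos,
      show (1:ℝ) - ν + ν = 1 by ring, show ν + (ν + 2 * -ν) = 0 by ring,
      Real.rpow_one, Real.rpow_zero, mul_one]
    norm_num
  calc 2 ^ ((1:ℝ) - ν) / Real.Gamma ν * (x / φ) ^ ν *
        (1 / 2 * (x / φ / 2) ^ ν * (((x / φ) ^ 2 / 4) ^ (-ν) * J))
      = (2 ^ ((1:ℝ) - ν) * (x / φ) ^ ν * (x / φ / 2) ^ ν * ((x / φ) ^ 2 / 4) ^ (-ν) / 2)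
          / Real.Gamma ν * J := by ring
    _ = 1 / Real.Gamma ν * J := by rw [hcoef]

lemma swap_helper (F : ℝ → ℝ → ℝ) (hF : Measurable (Function.uncurry F))
    (hnn : ∀ a b : ℝ, 0 < a → 0 < b → 0 ≤ F a b)
    (hfin : ∫⁻ b in Ioi (0:ℝ), ∫⁻ a in Ioi (0:ℝ), ENNReal.ofReal (F a b) < ⊤) :
    ∫ a in Ioi (0:ℝ), ∫ b in Ioi (0:ℝ), F a b
      = ∫ b in Ioi (0:ℝ), ∫ a in Ioi (0:ℝ), F a b := by
  have hnn_ae : 0 ≤ᵐ[(volume.restrict (Ioi (0:ℝ))).prod (volume.restrict (Ioi (0:ℝ)))]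
      Function.uncurry F := by
    rw [Measure.prod_restrict]
    refine (ae_restrict_iff' (measurableSet_Ioi.prod measurableSet_Ioi)).2 (ae_of_all _ ?_)
    rintro ⟨a, b⟩ ⟨ha, hb⟩
    exact hnn a b ha hb
  have hint : Integrable (Function.uncurry F)
      ((volume.restrict (Ioi (0:ℝ))).prod (volume.restrict (Ioi (0:ℝ)))) := by
    refine ⟨hF.aestronglyMeasurable, (hasFiniteIntegral_iff_ofReal hnn_ae).2 ?_⟩
    rw [lintegral_prod_symm (fun p : ℝ × ℝ => ENNReal.ofReal (Function.uncurry F p))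
      (ENNReal.measurable_ofReal.comp hF).aemeasurable]
    exact hfin
  exact integral_integral_swap hint

lemma lintegral_prod_bound {F : ℝ → ℝ → ℝ} {g h : ℝ → ℝ}
    (hg : IntegrableOn g (Ioi 0)) (hh : IntegrableOn h (Ioi 0))
    (hbd : ∀ b ∈ Ioi (0:ℝ), ∀ a ∈ Ioi (0:ℝ), F a b ≤ g b * h a)
    (hgnn : ∀ b ∈ Ioi (0:ℝ), 0 ≤ g b) :
    ∫⁻ b in Ioi (0:ℝ), ∫⁻ a in Ioi (0:ℝ), ENNReal.ofReal (F a b) < ⊤ := by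
  calc ∫⁻ b in Ioi (0:ℝ), ∫⁻ a in Ioi (0:ℝ), ENNReal.ofReal (F a b)
      ≤ ∫⁻ b in Ioi (0:ℝ), ENNReal.ofReal (g b) * ∫⁻ a in Ioi (0:ℝ), ENNReal.ofReal (h a) := by
        refine lintegral_mono_ae ((ae_restrict_iff' measurableSet_Ioi).2 (ae_of_all _
          fun b hb => ?_))
        calc ∫⁻ a in Ioi (0:ℝ), ENNReal.ofReal (F a b)
            ≤ ∫⁻ a in Ioi (0:ℝ), ENNReal.ofReal (g b * h a) :=
              lintegral_mono_ae ((ae_restrict_iff' measurableSet_Ioi).2 (ae_of_all _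
                fun a ha => ENNReal.ofReal_le_ofReal (hbd b hb a ha)))
          _ = ENNReal.ofReal (g b) * ∫⁻ a in Ioi (0:ℝ), ENNReal.ofReal (h a) := by
              simp_rw [ENNReal.ofReal_mul (hgnn b hb)]
              exact lintegral_const_mul' _ _ ENNReal.ofReal_ne_top
    _ = (∫⁻ b in Ioi (0:ℝ), ENNReal.ofReal (g b)) * ∫⁻ a in Ioi (0:ℝ), ENNReal.ofReal (h a) :=
        lintegral_mul_const' _ _ hh.lintegral_lt_top.ne
    _ < ⊤ := ENNReal.mul_lt_top hg.lintegral_lt_top hh.lintegral_lt_top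

/-- The inverse-gamma density. -/
noncomputable def auxD (μ β y : ℝ) : ℝ :=
  (β ^ 2 / 2) ^ μ / Real.Gamma μ * y ^ (-μ - 1) * Real.exp (-β ^ 2 / (2 * y))

noncomputable def auxF (ν μ β x y s : ℝ) : ℝ :=
  Real.exp (-s - x ^ 2 / (4 * y * s)) * s ^ (ν - 1) * auxD μ β y

noncomputable def auxG (ν μ z t s : ℝ) : ℝ :=
  Real.exp (-(z * t)) * t ^ (μ - 1) * (Real.exp (-((1 + t) * s)) * s ^ (ν + μ - 1))

lemma measurable_auxF (ν μ β x : ℝ) : Measurable (Function.uncurry (auxF ν μ β x)) := by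
  unfold Function.uncurry auxF auxD
  fun_prop

lemma measurable_auxG (ν μ z : ℝ) : Measurable (Function.uncurry (auxG ν μ z)) := by
  unfold Function.uncurry auxG
  fun_prop

/-- For `ν, μ, β > 0`, the Kummer–Tricomi correlation
`K(x) = [Γ(ν+μ)/Γ(ν)] U(μ, 1-ν, x²/(2β²))` is the mixture `E_Φ[M_{ν,Φ}(x)]`, where
`Φ² ~ Inverse-Gamma(μ, β²/2)` (density `(β²/2)^μ/Γ(μ) y^(-μ-1) e^(-β²/(2y))` on `(0,∞)`). -/
theorem kummer_tricomi_matern_mixture (ν μ β : ℝ) (hν : 0 < ν) (hμ : 0 < μ)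
    (hβ : 0 < β) (x : ℝ) (hx : 0 < x) :
    Real.Gamma (ν + μ) / Real.Gamma ν * tricomiU μ (1 - ν) (x ^ 2 / (2 * β ^ 2)) =
      ∫ y in Set.Ioi (0 : ℝ),
        maternCorr ν (Real.sqrt y) x *
          ((β ^ 2 / 2) ^ μ / Real.Gamma μ * y ^ (-μ - 1) *
            Real.exp (-β ^ 2 / (2 * y))) := by
  have hΓν : (0:ℝ) < Real.Gamma ν := Real.Gamma_pos_of_pos hν
  have hΓμ : (0:ℝ) < Real.Gamma μ := Real.Gamma_pos_of_pos hμ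
  have hνμ : (0:ℝ) < ν + μ := by linarith
  have hΓp : (0:ℝ) < Real.Gamma (ν + μ) := Real.Gamma_pos_of_pos hνμ
  set z := x ^ 2 / (2 * β ^ 2) with hz_def
  have hz : 0 < z := by rw [hz_def]; positivity
  have hDnn : ∀ y : ℝ, 0 < y → 0 ≤ auxD μ β y := by
    intro y hy
    unfold auxD
    positivity
  have hDint : IntegrableOn (auxD μ β) (Ioi 0) := by
    have h0 : (0:ℝ) < β ^ 2 / 2 := by positivity
    have h1 : IntegrableOn (fun y : ℝ => (β ^ 2 / 2) ^ μ / Real.Gamma μ *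
        (Real.exp (-((β ^ 2 / 2) / y)) * y ^ (-μ - 1))) (Ioi 0) :=
      (intOn_exp_inv h0 hμ).const_mul ((β ^ 2 / 2) ^ μ / Real.Gamma μ)
    refine IntegrableOn.congr_fun h1 (fun y hy => ?_) measurableSet_Ioi
    have hy' : (0:ℝ) < y := hy
    unfold auxD
    rw [show (-β ^ 2 / (2 * y) : ℝ) = -((β ^ 2 / 2) / y) by ring]
    ring
  -- the common value of both sides (up to the 1/Γ(ν) factor)
  -- RHS computation
  have hmat : ∀ y ∈ Ioi (0:ℝ),
      maternCorr ν (Real.sqrt y) x *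
          ((β ^ 2 / 2) ^ μ / Real.Gamma μ * y ^ (-μ - 1) * Real.exp (-β ^ 2 / (2 * y)))
        = 1 / Real.Gamma ν * ∫ s in Ioi (0:ℝ), auxF ν μ β x y s := by
    intro y hy
    have hy' : (0:ℝ) < y := hy
    have hsq : Real.sqrt y ^ 2 = y := Real.sq_sqrt hy'.le
    rw [matern_eq (Real.sqrt_pos.2 hy') hx, hsq, mul_assoc, ← integral_mul_const]
    congr 1
    refine setIntegral_congr_fun measurableSet_Ioi (fun s hs => ?_)
    unfold auxF auxD
    rw [div_div]
  have hFnn : ∀ a b : ℝ, 0 < a → 0 < b → 0 ≤ auxF ν μ β x a b := by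
    intro a b ha hb
    unfold auxF auxD
    positivity
  have hFfin : ∫⁻ s in Ioi (0:ℝ), ∫⁻ y in Ioi (0:ℝ), ENNReal.ofReal (auxF ν μ β x y s) < ⊤ := by
    refine lintegral_prod_bound (g := fun s : ℝ => Real.exp (-s) * s ^ (ν - 1))
      (h := auxD μ β) (Real.GammaIntegral_convergent hν) hDint ?_ ?_
    · intro s hs y hy
      have hs' : (0:ℝ) < s := hs
      have hy' : (0:ℝ) < y := hy
      unfold auxF
      have h1 : Real.exp (-s - x ^ 2 / (4 * y * s)) ≤ Real.exp (-s) := by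
        apply Real.exp_le_exp.2
        have : (0:ℝ) ≤ x ^ 2 / (4 * y * s) := by positivity
        linarith
      exact mul_le_mul_of_nonneg_right
        (mul_le_mul_of_nonneg_right h1 (Real.rpow_nonneg hs'.le _)) (hDnn y hy')
    · intro s hs
      have hs' : (0:ℝ) < s := hs
      positivity
  have hstep2 : ∀ s ∈ Ioi (0:ℝ),
      ∫ y in Ioi (0:ℝ), auxF ν μ β x y s
        = Real.exp (-s) * s ^ (ν + μ - 1) * (s + z) ^ (-μ) := by
    intro s hs
    have hs' : (0:ℝ) < s := hs
    have hq : (0:ℝ) < x ^ 2 / (4 * s) + β ^ 2 / 2 := by positivity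
    have e : ∀ y ∈ Ioi (0:ℝ), auxF ν μ β x y s
        = (Real.exp (-s) * s ^ (ν - 1) * ((β ^ 2 / 2) ^ μ / Real.Gamma μ)) *
          (Real.exp (-((x ^ 2 / (4 * s) + β ^ 2 / 2) / y)) * y ^ (-μ - 1)) := by
      intro y hy
      have hy' : (0:ℝ) < y := hy
      unfold auxF auxD
      rw [show (-s - x ^ 2 / (4 * y * s) : ℝ) = -s + -(x ^ 2 / (4 * s) / y) by
          field_simp
          ring,
        Real.exp_add,
        show (-β ^ 2 / (2 * y) : ℝ) = -((β ^ 2 / 2) / y) by ring,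
        show (-((x ^ 2 / (4 * s) + β ^ 2 / 2) / y) : ℝ)
          = -(x ^ 2 / (4 * s) / y) + -((β ^ 2 / 2) / y) by ring,
        Real.exp_add]
      ring
    rw [setIntegral_congr_fun measurableSet_Ioi e, integral_const_mul, int_exp_inv hq hμ]
    have hqe : x ^ 2 / (4 * s) + β ^ 2 / 2 = (β ^ 2 / 2) * ((s + z) / s) := by
      rw [hz_def]
      field_simp
      ring
    have hsz : (0:ℝ) < s + z := by linarith
    rw [hqe, Real.mul_rpow (by positivity) (by positivity),
      Real.div_rpow hsz.le hs'.le, Real.rpow_neg hsz.le μ,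
      show ν + μ - 1 = (ν - 1) + μ by ring, Real.rpow_add hs']
    have h1 : ((β ^ 2 / 2 : ℝ)) ^ μ ≠ 0 := by positivity
    have h2 : (s : ℝ) ^ μ ≠ 0 := by positivity
    have h3 : ((s + z : ℝ)) ^ μ ≠ 0 := by positivity
    field_simp
  have hRHS : (∫ y in Ioi (0:ℝ),
      maternCorr ν (Real.sqrt y) x *
        ((β ^ 2 / 2) ^ μ / Real.Gamma μ * y ^ (-μ - 1) * Real.exp (-β ^ 2 / (2 * y))))
      = 1 / Real.Gamma ν *
        ∫ s in Ioi (0:ℝ), Real.exp (-s) * s ^ (ν + μ - 1) * (s + z) ^ (-μ) := by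
    rw [setIntegral_congr_fun measurableSet_Ioi hmat, integral_const_mul,
      swap_helper (auxF ν μ β x) (measurable_auxF ν μ β x) hFnn hFfin,
      setIntegral_congr_fun measurableSet_Ioi hstep2]
  -- LHS computation
  have hU : tricomiU μ (1 - ν) z
      = 1 / Real.Gamma μ *
        ∫ t in Ioi (0:ℝ), Real.exp (-(z * t)) * t ^ (μ - 1) * (1 + t) ^ (-(ν + μ)) := by
    unfold tricomiU
    congr 1
    refine setIntegral_congr_fun measurableSet_Ioi (fun t ht => ?_)
    rw [neg_mul, show (1 - ν) - μ - 1 = -(ν + μ) by ring]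
  have hrep : ∀ t ∈ Ioi (0:ℝ),
      Real.exp (-(z * t)) * t ^ (μ - 1) * (1 + t) ^ (-(ν + μ))
        = 1 / Real.Gamma (ν + μ) * ∫ s in Ioi (0:ℝ), auxG ν μ z t s := by
    intro t ht
    have ht' : (0:ℝ) < t := ht
    have h1t : (0:ℝ) < 1 + t := by linarith
    unfold auxG
    rw [integral_const_mul, int_exp_rpow h1t hνμ, Real.rpow_neg h1t.le]
    field_simp
  have hGnn : ∀ a b : ℝ, 0 < a → 0 < b → 0 ≤ auxG ν μ z a b := by
    intro a b ha hb
    unfold auxG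
    positivity
  have hGfin : ∫⁻ s in Ioi (0:ℝ), ∫⁻ t in Ioi (0:ℝ), ENNReal.ofReal (auxG ν μ z t s) < ⊤ := by
    refine lintegral_prod_bound (g := fun s : ℝ => Real.exp (-s) * s ^ (ν + μ - 1))
      (h := fun t : ℝ => Real.exp (-(z * t)) * t ^ (μ - 1))
      (Real.GammaIntegral_convergent hνμ) (intOn_exp_rpow hz hμ) ?_ ?_
    · intro s hs t ht
      have hs' : (0:ℝ) < s := hs
      have ht' : (0:ℝ) < t := ht
      unfold auxG
      have h1 : Real.exp (-((1 + t) * s)) ≤ Real.exp (-s) := by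
        apply Real.exp_le_exp.2
        nlinarith
      calc Real.exp (-(z * t)) * t ^ (μ - 1) * (Real.exp (-((1 + t) * s)) * s ^ (ν + μ - 1))
          = Real.exp (-((1 + t) * s)) *
              (Real.exp (-(z * t)) * t ^ (μ - 1) * s ^ (ν + μ - 1)) := by ring
        _ ≤ Real.exp (-s) * (Real.exp (-(z * t)) * t ^ (μ - 1) * s ^ (ν + μ - 1)) :=
            mul_le_mul_of_nonneg_right h1 (by positivity)
        _ = Real.exp (-s) * s ^ (ν + μ - 1) * (Real.exp (-(z * t)) * t ^ (μ - 1)) := by ring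
    · intro s hs
      have hs' : (0:ℝ) < s := hs
      positivity
  have hGin : ∀ s ∈ Ioi (0:ℝ),
      ∫ t in Ioi (0:ℝ), auxG ν μ z t s
        = Real.Gamma μ * (Real.exp (-s) * s ^ (ν + μ - 1) * (s + z) ^ (-μ)) := by
    intro s hs
    have hs' : (0:ℝ) < s := hs
    have hzs : (0:ℝ) < z + s := by linarith
    have e : ∀ t ∈ Ioi (0:ℝ), auxG ν μ z t s
        = (Real.exp (-s) * s ^ (ν + μ - 1)) * (Real.exp (-((z + s) * t)) * t ^ (μ - 1)) := by
      intro t ht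
      unfold auxG
      have h2 : Real.exp (-(z * t)) * Real.exp (-((1 + t) * s))
          = Real.exp (-s) * Real.exp (-((z + s) * t)) := by
        rw [← Real.exp_add, ← Real.exp_add]
        congr 1
        ring
      linear_combination (t ^ (μ - 1) * s ^ (ν + μ - 1)) * h2
    rw [setIntegral_congr_fun measurableSet_Ioi e, integral_const_mul, int_exp_rpow hzs hμ,
      Real.rpow_neg (by linarith : (0:ℝ) ≤ s + z), show z + s = s + z from add_comm z s]
    have h3 : ((s + z : ℝ)) ^ μ ≠ 0 := by positivity
    field_simp
  have hLHS : Real.Gamma (ν + μ) / Real.Gamma ν * tricomiU μ (1 - ν) z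
      = 1 / Real.Gamma ν *
        ∫ s in Ioi (0:ℝ), Real.exp (-s) * s ^ (ν + μ - 1) * (s + z) ^ (-μ) := by
    rw [hU, setIntegral_congr_fun measurableSet_Ioi hrep, integral_const_mul,
      swap_helper (auxG ν μ z) (measurable_auxG ν μ z) hGnn hGfin,
      setIntegral_congr_fun measurableSet_Ioi hGin, integral_const_mul]
    field_simp
  rw [hLHS, hRHS]
end
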